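/- sin(4π/13)/sin(2π/13) - sin(6π/13)/sin(3π/13) - sin(2π/13)/sin(π/13) + sin(5π/13)/sin(4π/13) - sin(3π/13)/sin(5π/13) + sin(π/13)/sin(6π/13) = -1. -/

import Mathlib

/-!
Each quotient is a double-angle ratio sin 2b / sin b = 2 cos b (for the last three after
sin (π - 2b) = sin 2b), so the left side is 2 ∑_{k=1}^{6} (-1)^k cos (kπ/13). Multiplying this
alternating sum by 2 cos (π/26) makes it telescope to -cos (π/26), because cos (13π/26) = 0.
-/

open Real Finset

theorem two_mul_cos_half_mul_sum_neg_one_pow_mul_cos (x : ℝ) (n : ℕ) :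
    2 * cos (x / 2) * ∑ k ∈ Icc 1 n, (-1) ^ k * cos (k * x)
      = (-1) ^ n * cos ((2 * n + 1) * x / 2) - cos (x / 2) := by
  induction n with
  | zero => simp
  | succ n ih =>
    have prod_to_sum : cos ((2 * (n + 1 : ℝ) + 1) * x / 2) + cos ((2 * n + 1) * x / 2)
        = 2 * cos (x / 2) * cos ((n + 1 : ℝ) * x) := by
      rw [cos_add_cos]; ring_nf
    rw [sum_Icc_succ_top (by omega), mul_add, ih]
    push_cast
    linear_combination (-1) ^ n * prod_to_sum

theorem two_mul_sum_neg_one_pow_mul_cos_pi_div {m : ℕ} (hm : 0 < m) :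
    2 * ∑ k ∈ Icc 1 m, (-1) ^ k * cos (k * π / (2 * m + 1)) = -1 := by
  set x := π / (2 * m + 1) with hx
  have hden : (1 : ℝ) < 2 * m + 1 := by
    have : (1 : ℝ) ≤ m := by exact_mod_cast hm
    linarith
  have hx_pos : 0 < x := div_pos pi_pos (by linarith)
  have hx_lt : x < π := div_lt_self pi_pos hden
  have cos_half_pos : 0 < cos (x / 2) := cos_pos_of_mem_Ioo ⟨by linarith, by linarith⟩
  have cos_top : cos ((2 * m + 1) * x / 2) = 0 := by
    rw [hx, mul_div_cancel₀ _ (by linarith), cos_pi_div_two]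
  have key := two_mul_cos_half_mul_sum_neg_one_pow_mul_cos x m
  rw [cos_top, mul_zero, zero_sub] at key
  apply mul_left_cancel₀ cos_half_pos.ne'
  simp_rw [mul_div_assoc]
  linear_combination key

theorem sin_two_mul_div_sin {x : ℝ} (hx : sin x ≠ 0) : sin (2 * x) / sin x = 2 * cos x := by
  rw [sin_two_mul]; field_simp

theorem stmt_10 :
    Real.sin (4 * π / 13) / Real.sin (2 * π / 13)
      - Real.sin (6 * π / 13) / Real.sin (3 * π / 13)
      - Real.sin (2 * π / 13) / Real.sin (π / 13)
      + Real.sin (5 * π / 13) / Real.sin (4 * π / 13)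
      - Real.sin (3 * π / 13) / Real.sin (5 * π / 13)
      + Real.sin (π / 13) / Real.sin (6 * π / 13) = -1 := by
  have ratio (a b : ℝ) (hb : 0 < b) (hbπ : b < π) (h : sin a = sin (2 * b)) :
      sin a / sin b = 2 * cos b := by
    rw [h, sin_two_mul_div_sin (sin_pos_of_pos_of_lt_pi hb hbπ).ne']
  have := pi_pos
  rw [ratio (4 * π / 13) (2 * π / 13) (by positivity) (by linarith) (by ring_nf),
    ratio (6 * π / 13) (3 * π / 13) (by positivity) (by linarith) (by ring_nf),
    ratio (2 * π / 13) (π / 13) (by positivity) (by linarith) (by ring_nf),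
    ratio (5 * π / 13) (4 * π / 13) (by positivity) (by linarith) (by rw [← sin_pi_sub]; ring_nf),
    ratio (3 * π / 13) (5 * π / 13) (by positivity) (by linarith) (by rw [← sin_pi_sub]; ring_nf),
    ratio (π / 13) (6 * π / 13) (by positivity) (by linarith) (by rw [← sin_pi_sub]; ring_nf)]
  have alternating_sum := two_mul_sum_neg_one_pow_mul_cos_pi_div (m := 6) (by norm_num)
  norm_num [sum_Icc_succ_top] at alternating_sum
  linarith
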